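/- Let X_n denote the set of complex roots of Littlewood polynomials with exactly n nonzero terms (i.e., of degree n-1). If n divides m, then X_n is contained in X_m. -/

import Mathlib

/-- The set of roots of Littlewood polynomials with exactly `n` nonzero terms,
i.e. of degree `n - 1`. -/
def littlewoodRoots (n : ℕ) : Set ℂ :=
  {z | ∃ a : ℕ → ℂ, (∀ i < n, a i = 1 ∨ a i = -1) ∧
    ∑ i ∈ Finset.range n, a i * z ^ i = 0}

/-!
If `p` has coefficients `±1` and `n` terms, then `p(z) (1 + z^n + ⋯ + z^(m-n))` is again a
Littlewood polynomial, with the `m` coefficients obtained by repeating those of `p` periodically,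
and it vanishes wherever `p` does.
-/

open Finset

theorem sum_range_mul_mod_mul_pow {R : Type*} [CommSemiring R] (a : ℕ → R) (z : R) (n k : ℕ) :
    ∑ i ∈ range (n * k), a (i % n) * z ^ i =
      (∑ j ∈ range k, z ^ (n * j)) * ∑ i ∈ range n, a i * z ^ i := by
  induction k with
  | zero => simp
  | succ k ih =>
    have block : ∑ i ∈ range n, a ((n * k + i) % n) * z ^ (n * k + i) =
        z ^ (n * k) * ∑ i ∈ range n, a i * z ^ i := by
      rw [mul_sum]
      refine sum_congr rfl fun i hi => ?_
      rw [Nat.mul_add_mod, Nat.mod_eq_of_lt (mem_range.mp hi), pow_add]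
      ring
    rw [Nat.mul_succ, sum_range_add, ih, block, sum_range_succ, add_mul]

theorem littlewoodRoots_subset_of_dvd_general (n m : ℕ) (h : n ∣ m) :
    littlewoodRoots n ⊆ littlewoodRoots m := by
  rintro z ⟨a, ha, hroot⟩
  obtain ⟨k, rfl⟩ := h
  refine ⟨fun i => a (i % n), fun i hi => ha _ (Nat.mod_lt _ ?_), ?_⟩
  · exact Nat.pos_of_mul_pos_right (Nat.zero_lt_of_lt hi)
  · rw [sum_range_mul_mod_mul_pow, hroot, mul_zero]

theorem littlewoodRoots_subset_of_dvd (n m : ℕ) (hn : 0 < n) (h : n ∣ m) :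
    littlewoodRoots n ⊆ littlewoodRoots m :=
  littlewoodRoots_subset_of_dvd_general n m h
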